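/- Let (R,m) be a one-dimensional Cohen–Macaulay local ring, J a regular ideal, and A ⊆ J a reduction of J (i.e., AJⁿ = Jⁿ⁺¹ for some n ≥ 0). Then A·J* is a reduction of tr(J), and there exists n such that A·tr(J)ⁿ = J·tr(J)ⁿ, where products are taken inside Q(R). -/

import Mathlib

/-
The reduction equation `A·Jⁿ = Jⁿ⁺¹` transports to `Q(R)`. Multiplying it by `(J*)ⁿ⁺¹`,
resp. `(J*)ⁿ`, and regrouping in the commutative monoid of `R`-submodules of `Q(R)` gives
`(A·J*)·tr(J)ⁿ = tr(J)ⁿ⁺¹`, resp. `A·tr(J)ⁿ = J·tr(J)ⁿ`, with the same `n`.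
-/

open nonZeroDivisors IsLocalRing

variable (R : Type*) [CommRing R]

/-- The image of an ideal of `R` in the total quotient ring `Q(R)`, as an
`R`-submodule of `Q(R)`. -/
noncomputable def toQ (I : Ideal R) : Submodule R (Localization R⁰) :=
  Submodule.map (Algebra.linearMap R (Localization R⁰)) I

/-- `J* = J⁻¹ = {x ∈ Q(R) : x·J ⊆ R}`, as an `R`-submodule of `Q(R)`. -/
noncomputable def dualQ (J : Ideal R) : Submodule R (Localization R⁰) :=
  (1 : Submodule R (Localization R⁰)) / toQ R J

/-- The trace ideal `tr(J) = J·J*`, computed inside `Q(R)`. -/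
noncomputable def trQ (J : Ideal R) : Submodule R (Localization R⁰) :=
  toQ R J * dualQ R J

section ReductionEquation

variable {M : Type*} [CommMonoid M] {a j : M} {n : ℕ}

theorem mul_mul_pow_eq_pow_succ (h : a * j ^ n = j ^ (n + 1)) (d : M) :
    a * d * (j * d) ^ n = (j * d) ^ (n + 1) := by
  calc a * d * (j * d) ^ n = a * j ^ n * d ^ (n + 1) := by
        rw [mul_pow, pow_succ']; ac_rfl
    _ = (j * d) ^ (n + 1) := by rw [h, mul_pow]

theorem mul_pow_mul_eq_mul_mul_pow (h : a * j ^ n = j ^ (n + 1)) (d : M) :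
    a * (j * d) ^ n = j * (j * d) ^ n := by
  calc a * (j * d) ^ n = a * j ^ n * d ^ n := by rw [mul_pow, mul_assoc]
    _ = j * (j * d) ^ n := by rw [h, pow_succ', mul_pow, mul_assoc]

end ReductionEquation

section ToQ

variable {R}

theorem toQ_mul (I K : Ideal R) : toQ R (I * K) = toQ R I * toQ R K :=
  Submodule.map_mul I K (Algebra.ofId R (Localization R⁰))

theorem toQ_pow (I : Ideal R) (k : ℕ) : toQ R (I ^ k) = toQ R I ^ k :=
  Submodule.map_pow I (Algebra.ofId R (Localization R⁰)) k

end ToQ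

theorem reduction_of_trace_general (R : Type*) [CommRing R]
    (J : Ideal R)
    (A : Ideal R)
    (hred : ∃ n : ℕ, A * J ^ n = J ^ (n + 1)) :
    (∃ m : ℕ, (toQ R A * dualQ R J) * trQ R J ^ m = trQ R J ^ (m + 1)) ∧
      ∃ n : ℕ, toQ R A * trQ R J ^ n = toQ R J * trQ R J ^ n := by
  obtain ⟨n, hn⟩ := hred
  have hnQ : toQ R A * toQ R J ^ n = toQ R J ^ (n + 1) := by
    rw [← toQ_pow, ← toQ_pow, ← toQ_mul, hn]
  exact ⟨⟨n, mul_mul_pow_eq_pow_succ hnQ _⟩, ⟨n, mul_pow_mul_eq_mul_mul_pow hnQ _⟩⟩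

/-- Let `(R,m)` be a one-dimensional Cohen–Macaulay local ring, `J` a regular
ideal and `A ⊆ J` a reduction of `J` (so `A·Jⁿ = Jⁿ⁺¹` for some `n`).  Then
`A·J*` is a reduction of `tr(J)` and there exists `n` with
`A·tr(J)ⁿ = J·tr(J)ⁿ`, all products being taken inside `Q(R)`. -/
theorem reduction_of_trace (R : Type*) [CommRing R] [IsLocalRing R] [IsNoetherianRing R]
    (hdim : ringKrullDim R = 1)
    (hCM : ∃ r ∈ maximalIdeal R, r ∈ R⁰)
    (J : Ideal R) (hreg : ∃ x ∈ J, x ∈ R⁰)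
    (A : Ideal R) (hAJ : A ≤ J)
    (hred : ∃ n : ℕ, A * J ^ n = J ^ (n + 1)) :
    (∃ m : ℕ, (toQ R A * dualQ R J) * trQ R J ^ m = trQ R J ^ (m + 1)) ∧
      ∃ n : ℕ, toQ R A * trQ R J ^ n = toQ R J * trQ R J ^ n :=
  reduction_of_trace_general R J A hred
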